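/- Let ‖·‖ be a norm on ℝ^d, let S be a finite collection of subsets of ℝ^d, each with at least 2 elements, and let H(S) = (ℝ^d, E(S)) be the hypergraph where E(S) = {T ⊆ ℝ^d : T is congruent in (ℝ^d, ‖·‖) to some member of S}. Then χ(H(S)) < ∞. -/

import Mathlib

/-!
Pick in each `T ∈ S` two points at `N`-distance `r_T > 0`; every congruent copy of `T` again
contains two points at distance `r_T`. So it suffices to colour `ℝ^d` with finitely many colours
such that no two points at distance `r_T` get the same colour, for each of the finitely many `r_T`,
and to take the product colouring. Colour `x` by `(⌊x i / a⌋ mod k)ᵢ`: two points of the same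
colour are at sup-distance `< a` or `> (k - 1) a`. As `N` is equivalent to the sup norm, for `a`
small and `k` large neither is compatible with `N`-distance `r`.
-/

/-- A proper coloring of a hypergraph with edge set `E`: no edge is monochromatic. -/
def IsProperColoring {V : Type} {C : Type} (E : Set (Set V)) (φ : V → C) : Prop :=
  ∀ e ∈ E, ∃ x ∈ e, ∃ y ∈ e, φ x ≠ φ y

/-- The chromatic number of a hypergraph with vertex type `V` and edge set `E`. -/
noncomputable def chromNum {V : Type} (E : Set (Set V)) : Cardinal :=
  sInf {c : Cardinal | ∃ (C : Type) (φ : V → C), Cardinal.mk C = c ∧ IsProperColoring E φ}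

/-- Congruence in `(ℝ^d, ‖·‖)` where the norm is given by `N`: one set is the image of the
other under the composition of a surjective linear isometry of `(ℝ^d, N)` and a translation. -/
def NormCongruent (d : ℕ) (N : Seminorm ℝ (Fin d → ℝ)) (X Y : Set (Fin d → ℝ)) : Prop :=
  ∃ (f : (Fin d → ℝ) →ₗ[ℝ] (Fin d → ℝ)) (v : Fin d → ℝ),
    Function.Surjective f ∧ (∀ x, N (f x) = N x) ∧ Y = (fun x => f x + v) '' X

theorem chromNum_le_mk {V C : Type} {E : Set (Set V)} {φ : V → C}
    (hφ : IsProperColoring E φ) : chromNum E ≤ Cardinal.mk C :=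
  csInf_le' ⟨C, φ, rfl, hφ⟩

theorem chromNum_lt_aleph0 {V C : Type} [Finite C] {E : Set (Set V)} {φ : V → C}
    (hφ : IsProperColoring E φ) : chromNum E < Cardinal.aleph0 :=
  (chromNum_le_mk hφ).trans_lt (Cardinal.lt_aleph0_of_finite C)

theorem NormCongruent.exists_seminorm_sub_eq {d : ℕ} {N : Seminorm ℝ (Fin d → ℝ)}
    {X Y : Set (Fin d → ℝ)} (h : NormCongruent d N X Y) {p q : Fin d → ℝ} (hp : p ∈ X)
    (hq : q ∈ X) : ∃ x ∈ Y, ∃ y ∈ Y, N (x - y) = N (p - q) := by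
  obtain ⟨f, v, -, hf, rfl⟩ := h
  exact ⟨f p + v, ⟨p, hp, rfl⟩, f q + v, ⟨q, hq, rfl⟩,
    by rw [add_sub_add_right_eq_sub, ← map_sub, hf]⟩

section FiniteDimensional

variable {E : Type*} [NormedAddCommGroup E] [NormedSpace ℝ E] [FiniteDimensional ℝ E]

theorem Seminorm.continuous_of_finiteDimensional (N : Seminorm ℝ E) : Continuous N :=
  continuousOn_univ.1 (N.convexOn.continuousOn isOpen_univ)

theorem Seminorm.exists_forall_lt_of_norm_lt (N : Seminorm ℝ E) {r : ℝ} (hr : 0 < r) :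
    ∃ a > 0, ∀ x : E, ‖x‖ < a → N x < r := by
  obtain ⟨a, ha, h⟩ := Metric.continuous_iff.1 N.continuous_of_finiteDimensional 0 r hr
  refine ⟨a, ha, fun x hx => ?_⟩
  simpa [Real.dist_eq, abs_of_nonneg (apply_nonneg N x)] using h x (by simpa using hx)

theorem Seminorm.exists_pos_mul_norm_le (N : Seminorm ℝ E) (hN : ∀ x, N x = 0 → x = 0) :
    ∃ c > 0, ∀ x : E, c * ‖x‖ ≤ N x := by
  have hpos : ∀ x ∈ Metric.sphere (0 : E) 1, 0 < N x := fun x hx =>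
    (apply_nonneg N x).lt_of_ne fun h => by simp [hN x h.symm] at hx
  obtain ⟨c, hc, hmin⟩ := (isCompact_sphere (0 : E) 1).exists_forall_le'
    N.continuous_of_finiteDimensional.continuousOn hpos
  refine ⟨c, hc, fun x => ?_⟩
  rcases eq_or_ne x 0 with rfl | hx
  · simp
  have hx' : 0 < ‖x‖ := norm_pos_iff.2 hx
  have := hmin (‖x‖⁻¹ • x) (by simp [norm_smul, hx'.ne'])
  rw [map_smul_eq_mul, norm_inv, norm_norm] at this
  calc c * ‖x‖ ≤ ‖x‖⁻¹ * N x * ‖x‖ := by gcongr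
    _ = N x := by field_simp

end FiniteDimensional

theorem abs_sub_lt_or_lt_abs_sub_of_floor_div_modEq {a x y : ℝ} (ha : 0 < a) {k : ℕ}
    (h : ⌊x / a⌋ ≡ ⌊y / a⌋ [ZMOD k]) : |x - y| < a ∨ (k - 1) * a < |x - y| := by
  set p := ⌊x / a⌋
  set q := ⌊y / a⌋
  have hdiv : |x - y| / a = |x / a - y / a| := by rw [← sub_div, abs_div, abs_of_pos ha]
  have hfloor : |x / a - y / a - (p - q)| < 1 := by
    rw [abs_sub_lt_iff]
    constructor <;> linarith [Int.floor_le (x / a), Int.lt_floor_add_one (x / a),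
      Int.floor_le (y / a), Int.lt_floor_add_one (y / a)]
  rcases eq_or_ne p q with hpq | hpq
  · left
    rwa [hpq, sub_self, sub_zero, ← hdiv, div_lt_one ha] at hfloor
  · right
    have hk : (k : ℤ) ≤ |p - q| :=
      Int.le_of_dvd (abs_pos.2 (sub_ne_zero.2 hpq)) ((dvd_abs _ _).2 (Int.ModEq.dvd h.symm))
    have hk' : (k : ℝ) ≤ |(p : ℝ) - q| := by exact_mod_cast hk
    have : (k - 1 : ℝ) < |x - y| / a := by
      rw [hdiv]
      linarith [abs_sub_abs_le_abs_sub ((p : ℝ) - q) (x / a - y / a), abs_sub_comm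
        (x / a - y / a) ((p : ℝ) - q)]
    rwa [lt_div_iff₀ ha] at this

noncomputable def gridColor {ι : Type*} (a : ℝ) (k : ℕ) (x : ι → ℝ) : ι → ZMod k :=
  fun i => (⌊x i / a⌋ : ZMod k)

theorem norm_sub_lt_or_lt_norm_sub_of_gridColor_eq {ι : Type*} [Fintype ι] {a : ℝ} (ha : 0 < a)
    {k : ℕ} {u v : ι → ℝ} (h : gridColor a k u = gridColor a k v) :
    ‖u - v‖ < a ∨ (k - 1) * a < ‖u - v‖ := by
  by_cases hsmall : ∀ i, |u i - v i| < a
  · exact Or.inl ((pi_norm_lt_iff ha).2 fun i => by simpa [Real.norm_eq_abs] using hsmall i)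
  · push Not at hsmall
    obtain ⟨i, hi⟩ := hsmall
    have hmod : ⌊u i / a⌋ ≡ ⌊v i / a⌋ [ZMOD k] :=
      (ZMod.intCast_eq_intCast_iff _ _ _).1 (congrFun h i)
    refine Or.inr ((abs_sub_lt_or_lt_abs_sub_of_floor_div_modEq ha hmod).resolve_left
      hi.not_gt |>.trans_le ?_)
    simpa [Real.norm_eq_abs] using norm_le_pi_norm (u - v) i

theorem Seminorm.exists_finite_coloring_ne_of_sub_eq {ι : Type} [Fintype ι]
    (N : Seminorm ℝ (ι → ℝ)) (hN : ∀ x, N x = 0 → x = 0) {r : ℝ} (hr : 0 < r) :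
    ∃ (C : Type) (_ : Finite C) (φ : (ι → ℝ) → C), ∀ x y, N (x - y) = r → φ x ≠ φ y := by
  obtain ⟨c, hc, hlower⟩ := N.exists_pos_mul_norm_le hN
  obtain ⟨a, ha, hupper⟩ := N.exists_forall_lt_of_norm_lt hr
  set n : ℕ := ⌈r / (c * a)⌉₊
  have hn : r ≤ c * a * n := (div_le_iff₀' (by positivity)).1 (Nat.le_ceil _)
  refine ⟨ι → ZMod (n + 1), inferInstance, gridColor a (n + 1), fun x y hxy hcol => ?_⟩
  rcases norm_sub_lt_or_lt_norm_sub_of_gridColor_eq ha hcol with hlt | hgt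
  · exact (hupper _ hlt).ne hxy
  · push_cast at hgt
    rw [add_sub_cancel_right] at hgt
    nlinarith [hlower (x - y)]

/-- Lemma 4.2: if `S` is a finite collection of subsets of `(ℝ^d, ‖·‖)`, each with at
least 2 elements, then the hypergraph `H(S)` of all congruent copies of members of `S`
has finite chromatic number. -/
theorem chromNum_normCongruenceEdges_lt_aleph0 (d : ℕ) (N : Seminorm ℝ (Fin d → ℝ))
    (hN : ∀ x : Fin d → ℝ, N x = 0 → x = 0)
    (S : Set (Set (Fin d → ℝ))) (hSfin : S.Finite) (hScard : ∀ T ∈ S, T.Nontrivial) :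
    chromNum {e : Set (Fin d → ℝ) | ∃ T ∈ S, NormCongruent d N T e} < Cardinal.aleph0 := by
  choose p hp q hq hpq using fun T : S => hScard T T.2
  have hr : ∀ T : S, 0 < N (p T - q T) := fun T =>
    (apply_nonneg N _).lt_of_ne fun h => hpq T (sub_eq_zero.1 (hN _ h.symm))
  choose C hC φ hφ using fun T : S => N.exists_finite_coloring_ne_of_sub_eq hN (hr T)
  have : Finite S := hSfin.to_subtype
  refine chromNum_lt_aleph0 (φ := fun x (T : S) => φ T x) ?_
  rintro e ⟨T, hT, hcong⟩
  obtain ⟨x, hx, y, hy, hxy⟩ := hcong.exists_seminorm_sub_eq (hp ⟨T, hT⟩) (hq ⟨T, hT⟩)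
  exact ⟨x, hx, y, hy, fun h => hφ _ x y hxy (congrFun h _)⟩
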